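/- arXiv:2106.10697 — 3 statements merged into one kernel-verified Lean document; each statement's English description precedes it below -/
import Mathlib

section
/- Let Ω = Ω₁ × ⋯ × Ω_N ⊆ ℝ^{Nn} be nonempty, compact and convex, let F : ℝ^{Nn} → ℝ^{Nn} be continuous and strongly monotone on Ω with constant w > 0, let C = {y : Ay = d} with A ∈ ℝ^{l×Nn}, d ∈ ℝ^l, and suppose there exists ŷ in the topological interior of Ω with Aŷ = d. Then there exist a unique y* ∈ Ω ∩ C and a Lagrange multiplier μ* ∈ ℝ^l such that y* = P_Ω(y* − F(y*) − Aᵀμ*) and Ay* = d; moreover this y* is the unique solution of VI(Ω∩C, F). -/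
/-!
Let `K = Ω ∩ C`, compact and convex. By Minty's lemma a point `x ∈ K` with `⟪F y, x - y⟫ ≤ 0` for
all `y ∈ K` solves `VI(K, F)`; such points exist by compactness once finitely many of these closed
half-spaces always meet, and for `y₁, …, yₘ` a suitable convex combination is a saddle point of
the matrix game `M j i = ⟪F yⱼ, yᵢ - yⱼ⟫`, whose symmetric part is `≤ 0` by monotonicity (Sion's
minimax theorem). Strong monotonicity makes the solution `y*` unique.

Since `y*` minimises `⟪F y*, ·⟫` on `K`, the point `(A y*, ⟪F y*, y*⟫)` lies outside the open convex
image of `interior Ω × (0, ∞)` under `(u, s) ↦ (A u, ⟪F y*, u⟫ + s)` in `range A × ℝ`; a separating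
functional is non-vertical because of the Slater point `ŷ`, and its slope is the multiplier `μ*`.
By the variational characterisation of `P_{Ω_i}`, the fixed-point equations say exactly that `y*`
minimises `⟪F y* + Aᵀ μ*, ·⟫` on `Ω`, which converts KKT points into solutions of `VI(K, F)` and
back.
-/

open Set
open scoped RealInnerProductSpace Matrix

theorem exists_mem_stdSimplex_mulVec_nonpos {ι : Type*} [Fintype ι] [DecidableEq ι] [Nonempty ι]
    (M : Matrix ι ι ℝ) (hM : ∀ v ∈ stdSimplex ℝ ι, v ⬝ᵥ M *ᵥ v ≤ 0) :
    ∃ μ ∈ stdSimplex ℝ ι, M *ᵥ μ ≤ 0 := by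
  have hne : (stdSimplex ℝ ι).Nonempty :=
    ⟨_, single_mem_stdSimplex ℝ (Classical.arbitrary ι)⟩
  have hconv := convex_stdSimplex ℝ ι
  have hcpt := isCompact_stdSimplex ℝ ι
  obtain ⟨μ, hμ, ν, hν, hsaddle⟩ :=
    Sion.exists_isSaddlePointOn (f := fun x v => Matrix.toBilin' M v x) hne hconv hcpt
      (fun v _ => (Matrix.toBilin' M v).continuous_of_finiteDimensional.lowerSemicontinuous
        |>.lowerSemicontinuousOn _)
      (fun v _ => ((Matrix.toBilin' M v).convexOn hconv).quasiconvexOn) hconv hne hcpt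
      (fun x _ => ((Matrix.toBilin' M).flip x).continuous_of_finiteDimensional.upperSemicontinuous
        |>.upperSemicontinuousOn _)
      (fun x _ => (((Matrix.toBilin' M).flip x).concaveOn hconv).quasiconcaveOn)
  -- compare the value of the game at `(μ, eⱼ)` with its value at `(ν, ν)`
  refine ⟨μ, hμ, fun j => ?_⟩
  have h := hsaddle ν hν _ (single_mem_stdSimplex ℝ j)
  simp only [Matrix.toBilin'_apply', single_dotProduct, one_mul] at h
  exact h.trans (hM ν hν)

theorem dotProduct_mulVec_self_nonpos {ι : Type*} [Fintype ι] {M : Matrix ι ι ℝ}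
    (hM : ∀ i j, M i j + M j i ≤ 0) {v : ι → ℝ} (hv : 0 ≤ v) : v ⬝ᵥ M *ᵥ v ≤ 0 := by
  have h₁ : v ⬝ᵥ M *ᵥ v = ∑ i, ∑ j, v i * v j * M i j := by
    simp only [dotProduct, Matrix.mulVec, Finset.mul_sum]
    exact Finset.sum_congr rfl fun i _ => Finset.sum_congr rfl fun j _ => by ring
  have h₂ : v ⬝ᵥ M *ᵥ v = ∑ i, ∑ j, v i * v j * M j i := by
    rw [h₁, Finset.sum_comm]
    exact Finset.sum_congr rfl fun i _ => Finset.sum_congr rfl fun j _ => by ring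
  have : ∑ i, ∑ j, v i * v j * (M i j + M j i) ≤ 0 :=
    Finset.sum_nonpos fun i _ => Finset.sum_nonpos fun j _ =>
      mul_nonpos_of_nonneg_of_nonpos (mul_nonneg (hv i) (hv j)) (hM i j)
  simp only [mul_add, Finset.sum_add_distrib, ← h₁, ← h₂] at this
  linarith

section VariationalInequality

variable {E : Type*} [TopologicalSpace E] [AddCommGroup E] [Module ℝ E]
  {K : Set E} {T : E → E →L[ℝ] ℝ}

theorem exists_forall_apply_sub_nonpos_of_fintype (hK : Convex ℝ K) (hne : K.Nonempty)
    (hmono : ∀ x ∈ K, ∀ y ∈ K, 0 ≤ (T x - T y) (x - y)) {ι : Type*} [Fintype ι]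
    (y : ι → E) (hy : ∀ j, y j ∈ K) : ∃ x ∈ K, ∀ j, T (y j) (x - y j) ≤ 0 := by
  classical
  cases isEmpty_or_nonempty ι
  · obtain ⟨x, hx⟩ := hne
    exact ⟨x, hx, isEmptyElim⟩
  set M : Matrix ι ι ℝ := Matrix.of fun j i => T (y j) (y i - y j)
  have hM : ∀ i j, M i j + M j i ≤ 0 := by
    intro i j
    have := hmono (y i) (hy i) (y j) (hy j)
    simp only [M, Matrix.of_apply, sub_apply, map_sub] at this ⊢
    linarith
  obtain ⟨μ, hμ, hMμ⟩ :=
    exists_mem_stdSimplex_mulVec_nonpos M fun v hv => dotProduct_mulVec_self_nonpos hM hv.1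
  refine ⟨∑ i, μ i • y i, hK.sum_mem (fun i _ => hμ.1 i) hμ.2 fun i _ => hy i, fun j => ?_⟩
  have hsub : ∑ i, μ i • y i - y j = ∑ i, μ i • (y i - y j) := by
    simp only [smul_sub, Finset.sum_sub_distrib, ← Finset.sum_smul, hμ.2, one_smul]
  have hcomb : T (y j) (∑ i, μ i • y i - y j) = (M *ᵥ μ) j := by
    simp only [hsub, map_sum, map_smul, smul_eq_mul, Matrix.mulVec, dotProduct, M,
      Matrix.of_apply, mul_comm]
  exact hcomb ▸ hMμ j

theorem eq_of_forall_apply_sub_nonneg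
    (hT : ∀ x ∈ K, ∀ y ∈ K, x ≠ y → 0 < (T x - T y) (x - y)) {x y : E} (hx : x ∈ K)
    (hy : y ∈ K) (hxK : ∀ z ∈ K, 0 ≤ T x (z - x)) (hyK : ∀ z ∈ K, 0 ≤ T y (z - y)) :
    x = y := by
  by_contra hxy
  have h := hT x hx y hy hxy
  have hx' := hxK y hy
  have hy' := hyK x hx
  simp only [sub_apply, map_sub] at h hx' hy'
  linarith

variable [IsTopologicalAddGroup E]

theorem exists_forall_apply_sub_nonpos (hK : Convex ℝ K) (hne : K.Nonempty)
    (hKc : IsCompact K) (hmono : ∀ x ∈ K, ∀ y ∈ K, 0 ≤ (T x - T y) (x - y)) :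
    ∃ x ∈ K, ∀ y ∈ K, T y (x - y) ≤ 0 := by
  obtain ⟨x, hxK, hx⟩ := hKc.inter_iInter_nonempty (fun y : K => {x | T y (x - y) ≤ 0})
    (fun y => isClosed_le (by fun_prop) continuous_const) fun u => by
      obtain ⟨x, hx, h⟩ := exists_forall_apply_sub_nonpos_of_fintype hK hne hmono
        (fun j : u => (j : K).1) fun j => j.1.2
      exact ⟨x, hx, mem_iInter₂.2 fun y hy => h ⟨y, hy⟩⟩
  exact ⟨x, hxK, fun y hy => mem_iInter.1 hx ⟨y, hy⟩⟩

theorem forall_apply_sub_nonneg_of_forall_apply_sub_nonpos [ContinuousSMul ℝ E]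
    (hK : Convex ℝ K) (hT : ∀ v, ContinuousOn (fun y => T y v) K) {x : E} (hx : x ∈ K)
    (hminty : ∀ y ∈ K, T y (x - y) ≤ 0) : ∀ z ∈ K, 0 ≤ T x (z - x) := by
  intro z hz
  set γ : ℝ → E := fun t => x + t • (z - x)
  have hγK : ∀ t ∈ Icc (0 : ℝ) 1, γ t ∈ K := fun t ht => hK.add_smul_sub_mem hx hz ht
  have hγ : Filter.Tendsto γ (nhdsWithin 0 (Ioi 0)) (nhdsWithin x K) := by
    refine tendsto_nhdsWithin_iff.2 ⟨?_, ?_⟩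
    · have : Continuous γ := by fun_prop
      simpa [γ] using (this.tendsto 0).mono_left nhdsWithin_le_nhds
    · filter_upwards [Ioo_mem_nhdsGT (zero_lt_one' ℝ)] with t ht
      exact hγK t (Ioo_subset_Icc_self ht)
  refine ge_of_tendsto ((hT (z - x) x hx).tendsto.comp hγ) ?_
  filter_upwards [Ioo_mem_nhdsGT (zero_lt_one' ℝ)] with t ht
  have h := hminty (γ t) (hγK t (Ioo_subset_Icc_self ht))
  have hxγ : x - γ t = -t • (z - x) := by simp [γ]
  rw [hxγ, map_smul, smul_eq_mul, neg_mul, neg_nonpos] at h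
  exact nonneg_of_mul_nonneg_right h ht.1

theorem exists_forall_apply_sub_nonneg [ContinuousSMul ℝ E] (hK : Convex ℝ K) (hne : K.Nonempty)
    (hKc : IsCompact K) (hT : ∀ v, ContinuousOn (fun y => T y v) K)
    (hmono : ∀ x ∈ K, ∀ y ∈ K, 0 ≤ (T x - T y) (x - y)) :
    ∃ x ∈ K, ∀ z ∈ K, 0 ≤ T x (z - x) := by
  obtain ⟨x, hx, hminty⟩ := exists_forall_apply_sub_nonpos hK hne hKc hmono
  exact ⟨x, hx, forall_apply_sub_nonneg_of_forall_apply_sub_nonpos hK hT hx hminty⟩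

end VariationalInequality

section LagrangeMultiplier

variable {E F : Type*} [TopologicalSpace E] [AddCommGroup E] [Module ℝ E]
  [IsTopologicalAddGroup E] [ContinuousSMul ℝ E]
  [NormedAddCommGroup F] [NormedSpace ℝ F] [FiniteDimensional ℝ F]
  {Ω : Set E} {g : E →L[ℝ] ℝ} {L : E →L[ℝ] F} {y ŷ : E}

theorem exists_forall_mem_interior_apply_sub_add_nonneg (hΩ : Convex ℝ Ω)
    (hmin : ∀ u ∈ Ω, L u = L y → g y ≤ g u) (hŷ : ŷ ∈ interior Ω) (hLŷ : L ŷ = L y) :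
    ∃ φ : F →ₗ[ℝ] ℝ, ∀ u ∈ interior Ω, 0 ≤ g (u - y) + φ (L (u - y)) := by
  set V := LinearMap.range (L : E →ₗ[ℝ] F)
  set L' := (L : E →ₗ[ℝ] F).rangeRestrict
  -- restricting the codomain to `range L` makes `Ψ` surjective, hence an open map
  let Ψ : E × ℝ →ₗ[ℝ] V × ℝ := (L' ∘ₗ LinearMap.fst ℝ E ℝ).prod
    ((g : E →ₗ[ℝ] ℝ) ∘ₗ LinearMap.fst ℝ E ℝ + LinearMap.snd ℝ E ℝ)
  have hΨ : ∀ u s, Ψ (u, s) = (L' u, g u + s) := fun _ _ => rfl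
  have hL' : ∀ {u v}, L' u = L' v ↔ L u = L v := Subtype.ext_iff
  have hΨ_surj : Function.Surjective Ψ := by
    rintro ⟨v, t⟩
    obtain ⟨u, rfl⟩ := LinearMap.surjective_rangeRestrict _ v
    exact ⟨(u, t - g u), by simp [hΨ, L']⟩
  set S := Ψ '' (interior Ω ×ˢ Ioi 0)
  have hS_open : IsOpen S :=
    LinearMap.isOpenMap_of_finiteDimensional Ψ hΨ_surj _ (isOpen_interior.prod isOpen_Ioi)
  have hS_convex : Convex ℝ S := (hΩ.interior.prod (convex_Ioi 0)).linear_image Ψ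
  have hy_notMem : Ψ (y, 0) ∉ S := by
    rintro ⟨⟨u, s⟩, ⟨hu, hs⟩, h⟩
    simp only [hΨ, Prod.mk.injEq, hL', add_zero] at h
    linarith [hmin u (interior_subset hu) h.1, mem_Ioi.1 hs]
  obtain ⟨f, hf⟩ := geometric_hahn_banach_open_point hS_convex hS_open hy_notMem
  set ν := (f : V × ℝ →ₗ[ℝ] ℝ) ∘ₗ LinearMap.inl ℝ V ℝ
  set c := f (0, 1)
  have hf_apply : ∀ v t, f (v, t) = ν v + t * c := by
    intro v t
    rw [← smul_eq_mul, ← map_smul, Prod.smul_mk, smul_zero, smul_eq_mul, mul_one]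
    simp [ν, ← map_add]
  have hsep : ∀ u ∈ interior Ω, ∀ s > 0, ν (L' u) + (g u + s) * c < ν (L' y) + g y * c := by
    intro u hu s hs
    simpa [hΨ, hf_apply] using hf _ ⟨(u, s), ⟨hu, hs⟩, rfl⟩
  have hc : c < 0 := by
    have h := hsep ŷ hŷ 1 one_pos
    rw [hL'.2 hLŷ] at h
    nlinarith [hmin ŷ (interior_subset hŷ) hLŷ]
  obtain ⟨φ, hφ⟩ := LinearMap.exists_extend (c⁻¹ • ν)
  refine ⟨φ, fun u hu => le_of_forall_pos_lt_add fun s hs => ?_⟩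
  have hφL : φ (L (u - y)) = c⁻¹ * (ν (L' u) - ν (L' y)) := by
    rw [← map_sub, ← map_sub]
    exact LinearMap.congr_fun hφ (L' (u - y))
  have hpos := mul_pos_of_neg_of_neg (inv_lt_zero.2 hc)
    (by linarith [hsep u hu s hs] : (g u - g y + s) * c + (ν (L' u) - ν (L' y)) < 0)
  rw [hφL, map_sub]
  convert hpos using 1
  field_simp [hc.ne]
  ring

theorem exists_forall_apply_sub_add_nonneg (hΩ : Convex ℝ Ω)
    (hmin : ∀ u ∈ Ω, L u = L y → g y ≤ g u) (hŷ : ŷ ∈ interior Ω) (hLŷ : L ŷ = L y) :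
    ∃ φ : F →ₗ[ℝ] ℝ, ∀ u ∈ Ω, 0 ≤ g (u - y) + φ (L (u - y)) := by
  obtain ⟨φ, hφ⟩ := exists_forall_mem_interior_apply_sub_add_nonneg hΩ hmin hŷ hLŷ
  have hclosed : IsClosed {u | 0 ≤ g (u - y) + φ (L (u - y))} := by
    have := φ.continuous_of_finiteDimensional
    exact isClosed_le continuous_const (by fun_prop)
  have h := closure_minimal hφ hclosed
  rw [hΩ.closure_interior_eq_closure_of_nonempty_interior ⟨ŷ, hŷ⟩] at h
  exact ⟨φ, fun u hu => h (subset_closure hu)⟩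

end LagrangeMultiplier

section InnerProduct

variable {H : Type*} [NormedAddCommGroup H] [InnerProductSpace ℝ H]

theorem eq_iff_forall_inner_sub_le_zero {S : Set H} {x p q : H} (hp : p ∈ S)
    (hpx : ∀ u ∈ S, ⟪x - p, u - p⟫ ≤ 0) (hq : q ∈ S) :
    q = p ↔ ∀ u ∈ S, ⟪x - q, u - q⟫ ≤ 0 := by
  refine ⟨fun h => h ▸ hpx, fun hqx => ?_⟩
  have h : ⟪x - p, q - p⟫ + ⟪x - q, p - q⟫ = ‖q - p‖ ^ 2 := by
    rw [← neg_sub q p, inner_neg_right, ← sub_eq_add_neg, ← inner_sub_left,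
      sub_sub_sub_cancel_left, real_inner_self_eq_norm_sq]
  have := add_nonpos (hpx q hq) (hqx p hp)
  rw [← sub_eq_zero, ← norm_eq_zero]
  nlinarith [norm_nonneg (q - p)]

end InnerProduct

theorem forall_mem_pi_sum_nonneg_iff {ι : Type*} [Fintype ι] [DecidableEq ι] {α : ι → Type*}
    {s : ∀ i, Set (α i)} {y : ∀ i, α i} (hy : y ∈ univ.pi s) {f : ∀ i, α i → ℝ}
    (hf : ∀ i, f i (y i) = 0) :
    (∀ u ∈ univ.pi s, 0 ≤ ∑ i, f i (u i)) ↔ ∀ i, ∀ a ∈ s i, 0 ≤ f i a := by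
  refine ⟨fun h i a ha => ?_, fun h u hu =>
    Finset.sum_nonneg fun i _ => h i (u i) (hu i (mem_univ i))⟩
  have := h (Function.update y i a) ((update_mem_pi_iff_of_mem hy).2 fun _ => ha)
  rwa [Finset.sum_eq_single i (fun j _ hj => by rw [Function.update_of_ne hj, hf]) (by simp),
    Function.update_self] at this

theorem sum_norm_sub_sq_pos {ι : Type*} [Fintype ι] {H : ι → Type*}
    [∀ i, NormedAddCommGroup (H i)] {x y : ∀ i, H i} (h : x ≠ y) : 0 < ∑ i, ‖x i - y i‖ ^ 2 := by
  obtain ⟨i, hi⟩ := Function.ne_iff.1 h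
  exact Finset.sum_pos' (fun i _ => by positivity)
    ⟨i, Finset.mem_univ i, pow_pos (norm_pos_iff.2 (sub_ne_zero.2 hi)) 2⟩

section Product

variable {ι : Type*} [Fintype ι] {H : ι → Type*} [∀ i, NormedAddCommGroup (H i)]
  [∀ i, InnerProductSpace ℝ (H i)]

/-- `∀ i, H i` carries the sup norm, so its `ℓ²` inner product is spelled out. -/
noncomputable def piInnerSL (v : ∀ i, H i) : (∀ i, H i) →L[ℝ] ℝ :=
  ∑ i, (innerSL ℝ (v i)).comp (ContinuousLinearMap.proj i)

@[simp]
theorem piInnerSL_apply (v u : ∀ i, H i) : piInnerSL v u = ∑ i, ⟪v i, u i⟫ := by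
  simp [piInnerSL]

theorem continuousOn_piInnerSL_apply {X : Type*} [TopologicalSpace X] {f : X → ∀ i, H i}
    {s : Set X} (hf : ContinuousOn f s) (u : ∀ i, H i) :
    ContinuousOn (fun x => piInnerSL (f x) u) s := by
  simp only [piInnerSL_apply]
  fun_prop

variable [DecidableEq ι] [∀ i, FiniteDimensional ℝ (H i)] {G : Type*} [NormedAddCommGroup G]
  [InnerProductSpace ℝ G] [FiniteDimensional ℝ G] {Ω : ∀ i, Set (H i)} {P : ∀ i, H i → H i}

theorem forall_eq_proj_sub_iff (hPmem : ∀ i x, P i x ∈ Ω i)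
    (hPproj : ∀ i x, ∀ u ∈ Ω i, ⟪x - P i x, u - P i x⟫ ≤ 0) (A : ∀ i, H i →ₗ[ℝ] G)
    {y : ∀ i, H i} (hy : y ∈ univ.pi Ω) (v : ∀ i, H i) (μ : G) :
    (∀ i, y i = P i (y i - v i - LinearMap.adjoint (A i) μ)) ↔
      ∀ u ∈ univ.pi Ω, 0 ≤ ∑ i, ⟪v i, u i - y i⟫ + ⟪μ, ∑ i, A i (u i - y i)⟫ := by
  have hcoord : ∀ i, y i = P i (y i - v i - LinearMap.adjoint (A i) μ) ↔
      ∀ a ∈ Ω i, 0 ≤ ⟪v i + LinearMap.adjoint (A i) μ, a - y i⟫ := by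
    intro i
    rw [sub_sub, eq_iff_forall_inner_sub_le_zero (hPmem i _) (hPproj i _) (hy i (mem_univ i))]
    simp only [sub_sub_cancel_left, inner_neg_left, neg_nonpos]
  rw [forall_congr' hcoord, ← forall_mem_pi_sum_nonneg_iff hy
    (f := fun i a => ⟪v i + LinearMap.adjoint (A i) μ, a - y i⟫) (by simp)]
  simp only [inner_add_left, Finset.sum_add_distrib, LinearMap.adjoint_inner_left, inner_sum]

theorem sum_inner_sub_nonneg_of_forall_eq_proj_sub (hPmem : ∀ i x, P i x ∈ Ω i)
    (hPproj : ∀ i x, ∀ u ∈ Ω i, ⟪x - P i x, u - P i x⟫ ≤ 0) (A : ∀ i, H i →ₗ[ℝ] G)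
    {v y : ∀ i, H i} {μ : G} (hy : ∀ i, y i = P i (y i - v i - LinearMap.adjoint (A i) μ))
    {z : ∀ i, H i} (hz : z ∈ univ.pi Ω) (hAz : ∑ i, A i (z i) = ∑ i, A i (y i)) :
    0 ≤ ∑ i, ⟪v i, z i - y i⟫ := by
  have hyΩ : y ∈ univ.pi Ω := fun i _ => hy i ▸ hPmem i _
  simpa [hAz] using (forall_eq_proj_sub_iff hPmem hPproj A hyΩ v μ).1 hy z hz

theorem exists_forall_eq_proj_sub (hPmem : ∀ i x, P i x ∈ Ω i)
    (hPproj : ∀ i x, ∀ u ∈ Ω i, ⟪x - P i x, u - P i x⟫ ≤ 0) (A : ∀ i, H i →ₗ[ℝ] G)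
    (hΩ : Convex ℝ (univ.pi Ω)) {v y ŷ : ∀ i, H i} (hy : y ∈ univ.pi Ω)
    (hmin : ∀ u ∈ univ.pi Ω, ∑ i, A i (u i) = ∑ i, A i (y i) → 0 ≤ ∑ i, ⟪v i, u i - y i⟫)
    (hŷ : ŷ ∈ interior (univ.pi Ω)) (hAŷ : ∑ i, A i (ŷ i) = ∑ i, A i (y i)) :
    ∃ μ : G, ∀ i, y i = P i (y i - v i - LinearMap.adjoint (A i) μ) := by
  set L := (LinearMap.lsum ℝ H ℝ A).toContinuousLinearMap
  have hL : ∀ u, L u = ∑ i, A i (u i) := by simp [L]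
  obtain ⟨φ, hφ⟩ := exists_forall_apply_sub_add_nonneg (g := piInnerSL v) (L := L) hΩ
    (fun u hu hLu => by simpa [inner_sub_right] using hmin u hu (by simpa [hL] using hLu)) hŷ
    (by simpa [hL] using hAŷ)
  refine ⟨(InnerProductSpace.toDual ℝ G).symm φ.toContinuousLinearMap,
    (forall_eq_proj_sub_iff hPmem hPproj A hy v _).2 fun u hu => ?_⟩
  simpa [hL] using hφ u hu

end Product

theorem existence_uniqueness_gne_kkt_general (N n l : ℕ)
    (Ω : Fin N → Set (EuclideanSpace ℝ (Fin n)))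
    (hScpt : IsCompact (Set.univ.pi Ω))
    (hScvx : Convex ℝ (Set.univ.pi Ω))
    (P : Fin N → EuclideanSpace ℝ (Fin n) → EuclideanSpace ℝ (Fin n))
    (hPmem : ∀ i x, P i x ∈ Ω i)
    (hPproj : ∀ i x, ∀ u ∈ Ω i, ⟪x - P i x, u - P i x⟫ ≤ 0)
    (F : (Fin N → EuclideanSpace ℝ (Fin n)) → (Fin N → EuclideanSpace ℝ (Fin n)))
    (hFcont : ContinuousOn F (Set.univ.pi Ω))
    (w : ℝ) (hw : 0 < w)
    (hmono : ∀ x ∈ Set.univ.pi Ω, ∀ y ∈ Set.univ.pi Ω,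
      w * ∑ i, ‖x i - y i‖ ^ 2 ≤ ∑ i, ⟪F x i - F y i, x i - y i⟫)
    (A : Fin N → EuclideanSpace ℝ (Fin n) →ₗ[ℝ] EuclideanSpace ℝ (Fin l))
    (d : EuclideanSpace ℝ (Fin l))
    (yhat : Fin N → EuclideanSpace ℝ (Fin n))
    (hyhat : yhat ∈ interior (Set.univ.pi Ω))
    (hyhatC : ∑ i, A i (yhat i) = d) :
    ∃ ystar : Fin N → EuclideanSpace ℝ (Fin n), ∃ μstar : EuclideanSpace ℝ (Fin l),
      (∀ i, ystar i ∈ Ω i) ∧ (∑ i, A i (ystar i) = d) ∧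
      (∀ i, ystar i = P i (ystar i - F ystar i - LinearMap.adjoint (A i) μstar)) ∧
      (∀ (y' : Fin N → EuclideanSpace ℝ (Fin n)) (μ' : EuclideanSpace ℝ (Fin l)),
        (∀ i, y' i ∈ Ω i) → (∑ i, A i (y' i) = d) →
        (∀ i, y' i = P i (y' i - F y' i - LinearMap.adjoint (A i) μ')) → y' = ystar) ∧
      ((∀ y : Fin N → EuclideanSpace ℝ (Fin n), (∀ i, y i ∈ Ω i) →
        (∑ i, A i (y i) = d) → 0 ≤ ∑ i, ⟪F ystar i, y i - ystar i⟫) ∧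
       (∀ y' : Fin N → EuclideanSpace ℝ (Fin n), (∀ i, y' i ∈ Ω i) →
        (∑ i, A i (y' i) = d) →
        (∀ y : Fin N → EuclideanSpace ℝ (Fin n), (∀ i, y i ∈ Ω i) →
          (∑ i, A i (y i) = d) → 0 ≤ ∑ i, ⟪F y' i, y i - y' i⟫) → y' = ystar)) := by
  classical
  set K := univ.pi Ω ∩ {y | ∑ i, A i (y i) = d}
  set T := fun y => piInnerSL (F y)
  have hstrict : ∀ x ∈ K, ∀ y ∈ K, x ≠ y → 0 < (T x - T y) (x - y) := fun x hx y hy hxy => by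
    simpa [T, inner_sub_left] using
      (mul_pos hw (sum_norm_sub_sq_pos hxy)).trans_le (hmono x hx.1 y hy.1)
  have hC : {y | ∑ i, A i (y i) = d} = LinearMap.lsum ℝ _ ℝ A ⁻¹' {d} := by
    ext y
    simp
  have hK_compact : IsCompact K := hScpt.inter_right
    (hC ▸ isClosed_singleton.preimage (LinearMap.continuous_of_finiteDimensional _))
  have hK_convex : Convex ℝ K := hScvx.inter (hC ▸ (convex_singleton d).linear_preimage _)
  obtain ⟨ystar, hystar, hVI⟩ := exists_forall_apply_sub_nonneg hK_convex
    ⟨yhat, interior_subset hyhat, hyhatC⟩ hK_compact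
    (fun v => continuousOn_piInnerSL_apply (hFcont.mono inter_subset_left) v)
    fun x hx y hy => (eq_or_ne x y).elim (fun h => by simp [h]) fun h => (hstrict x hx y hy h).le
  have huniq : ∀ y ∈ K, (∀ z ∈ K, 0 ≤ T y (z - y)) → y = ystar :=
    fun y hy hyK => eq_of_forall_apply_sub_nonneg hstrict hy hystar hyK hVI
  obtain ⟨μ, hμ⟩ := exists_forall_eq_proj_sub hPmem hPproj A hScvx hystar.1
    (fun u hu hAu => by simpa using hVI u ⟨hu, hAu.trans hystar.2⟩) hyhat
    (hyhatC.trans hystar.2.symm)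
  have hmem : ∀ y, (∀ i, y i ∈ Ω i) → ∑ i, A i (y i) = d → y ∈ K :=
    fun y hy hyC => ⟨fun i _ => hy i, hyC⟩
  refine ⟨ystar, μ, fun i => hystar.1 i (mem_univ i), hystar.2, hμ,
    fun y' μ' hy'Ω hy'C hy'KKT => huniq y' (hmem y' hy'Ω hy'C) fun z hz => ?_,
    fun y hyΩ hyC => by simpa [T] using hVI y (hmem y hyΩ hyC),
    fun y' hy'Ω hy'C hy'VI => huniq y' (hmem y' hy'Ω hy'C) fun z hz => ?_⟩
  · simpa [T] using sum_inner_sub_nonneg_of_forall_eq_proj_sub hPmem hPproj A hy'KKT hz.1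
      (hz.2.trans hy'C.symm)
  · simpa [T] using hy'VI z (fun i => hz.1 i (mem_univ i)) hz.2

/-- Under compactness, convexity, continuity and strong monotonicity, and a Slater-type interior
point of `Ω` satisfying the coupled equality constraint, there exist a unique `y* ∈ Ω ∩ C` and a
Lagrange multiplier `μ*` with `y* = P_Ω(y* − F(y*) − Aᵀμ*)` and `Ay* = d`; moreover `y*` is the
unique solution of `VI(Ω ∩ C, F)`. -/
theorem existence_uniqueness_gne_kkt (N n l : ℕ)
    (Ω : Fin N → Set (EuclideanSpace ℝ (Fin n)))
    (hSne : (Set.univ.pi Ω).Nonempty)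
    (hScpt : IsCompact (Set.univ.pi Ω))
    (hScvx : Convex ℝ (Set.univ.pi Ω))
    (P : Fin N → EuclideanSpace ℝ (Fin n) → EuclideanSpace ℝ (Fin n))
    (hPmem : ∀ i x, P i x ∈ Ω i)
    (hPproj : ∀ i x, ∀ u ∈ Ω i, ⟪x - P i x, u - P i x⟫ ≤ 0)
    (F : (Fin N → EuclideanSpace ℝ (Fin n)) → (Fin N → EuclideanSpace ℝ (Fin n)))
    (hFcont : ContinuousOn F (Set.univ.pi Ω))
    (w : ℝ) (hw : 0 < w)
    (hmono : ∀ x ∈ Set.univ.pi Ω, ∀ y ∈ Set.univ.pi Ω,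
      w * ∑ i, ‖x i - y i‖ ^ 2 ≤ ∑ i, ⟪F x i - F y i, x i - y i⟫)
    (A : Fin N → EuclideanSpace ℝ (Fin n) →ₗ[ℝ] EuclideanSpace ℝ (Fin l))
    (d : EuclideanSpace ℝ (Fin l))
    (yhat : Fin N → EuclideanSpace ℝ (Fin n))
    (hyhat : yhat ∈ interior (Set.univ.pi Ω))
    (hyhatC : ∑ i, A i (yhat i) = d) :
    ∃ ystar : Fin N → EuclideanSpace ℝ (Fin n), ∃ μstar : EuclideanSpace ℝ (Fin l),
      (∀ i, ystar i ∈ Ω i) ∧ (∑ i, A i (ystar i) = d) ∧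
      (∀ i, ystar i = P i (ystar i - F ystar i - LinearMap.adjoint (A i) μstar)) ∧
      (∀ (y' : Fin N → EuclideanSpace ℝ (Fin n)) (μ' : EuclideanSpace ℝ (Fin l)),
        (∀ i, y' i ∈ Ω i) → (∑ i, A i (y' i) = d) →
        (∀ i, y' i = P i (y' i - F y' i - LinearMap.adjoint (A i) μ')) → y' = ystar) ∧
      ((∀ y : Fin N → EuclideanSpace ℝ (Fin n), (∀ i, y i ∈ Ω i) →
        (∑ i, A i (y i) = d) → 0 ≤ ∑ i, ⟪F ystar i, y i - ystar i⟫) ∧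
       (∀ y' : Fin N → EuclideanSpace ℝ (Fin n), (∀ i, y' i ∈ Ω i) →
        (∑ i, A i (y' i) = d) →
        (∀ y : Fin N → EuclideanSpace ℝ (Fin n), (∀ i, y i ∈ Ω i) →
          (∑ i, A i (y i) = d) → 0 ≤ ∑ i, ⟪F y' i, y i - y' i⟫) → y' = ystar)) :=
  existence_uniqueness_gne_kkt_general N n l Ω hScpt hScvx P hPmem hPproj F hFcont w hw hmono A d
    yhat hyhat hyhatC
end

section
/- Let each Ω_i ⊆ ℝ^n be nonempty, closed and convex, with metric projections P_{Ω_i}; let g_i : ℝ^n × ℝ^m → ℝ^n, φ_i : ℝ^n → ℝ^m, A_i ∈ ℝ^{l×n}, d_i ∈ ℝ^l, α > 0, and σ(y) = Σ_{i=1}^N φ_i(y_i). Let L ∈ ℝ^{N×N} have all row sums zero and all column sums zero, and suppose every v ∈ ℝ^N with Lv = 0 is a multiple of 1_N. Suppose x_i* ∈ ℝ^n, v_i* = 0, μ_i*, z_i* ∈ ℝ^l with Σ_i z_i* = 0, and η_i*, w_i* ∈ ℝ^m satisfy, with y_i* = P_{Ω_i}(x_i*): (i) 0 = −x_i* + y_i*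 − g_i(y_i*, η_i*) − A_iᵀμ_i* for all i; (ii) 0 = −α Σ_j L_{ij} μ_j* − z_i* + A_i y_i* − d_i for all i; (iii) Σ_j L_{ij} μ_j* = 0 for all i; (iv) 0 = −η_i* − Σ_j L_{ij} η_j* − Σ_j L_{ij} w_j* + N φ_i(y_i*) for all i; (v) Σ_j L_{ij} η_j* = 0 for all i. Then: η_i* = σ(y*) for all i; there exists μ* ∈ ℝ^l with μ_i* = μ* for all i; Σ_i A_i y_i* = Σ_i d_i; and y_i* = P_{Ω_i}(y_i* − g_i(y_i*, σ(y*)) − A_iᵀμ*) for all i. -/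
open scoped RealInnerProductSpace

namespace Matrix

theorem sum_sum_smul_eq_zero_of_sum_col_eq_zero {ι R V : Type*} [Fintype ι] [Semiring R]
    [AddCommMonoid V] [Module R V] (L : Matrix ι ι R) (hcol : ∀ j, ∑ i, L i j = 0) (w : ι → V) :
    ∑ i, ∑ j, L i j • w j = 0 := by
  rw [Finset.sum_comm]
  exact Finset.sum_eq_zero fun j _ => by rw [← Finset.sum_smul, hcol j, zero_smul]

variable {ι R V : Type*} [Fintype ι] [CommRing R] [AddCommGroup V] [Module R V]

/-- Every linear functional on `V` sends `f` into the scalar kernel of `L`, and linear functionals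
separate the points of a projective module. -/
theorem eq_of_forall_sum_smul_eq_zero [Module.Projective R V] (L : Matrix ι ι R)
    (hker : ∀ v : ι → R, L *ᵥ v = 0 → ∃ c : R, v = fun _ => c)
    {f : ι → V} (hf : ∀ i, ∑ j, L i j • f j = 0) (i i' : ι) : f i = f i' := by
  rw [← sub_eq_zero, ← Module.forall_dual_apply_eq_zero_iff R]
  intro ℓ
  have hℓf : L *ᵥ (ℓ ∘ f) = 0 := by
    funext k
    simpa [mulVec, dotProduct, map_sum] using congrArg ℓ (hf k)
  obtain ⟨c, hc⟩ := hker _ hℓf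
  rw [map_sub, sub_eq_zero]
  exact (congrFun hc i).trans (congrFun hc i').symm

theorem exists_eq_const_of_forall_sum_smul_eq_zero [Module.Projective R V] (L : Matrix ι ι R)
    (hker : ∀ v : ι → R, L *ᵥ v = 0 → ∃ c : R, v = fun _ => c)
    {f : ι → V} (hf : ∀ i, ∑ j, L i j • f j = 0) : ∃ c : V, ∀ i, f i = c := by
  rcases isEmpty_or_nonempty ι with _ | ⟨⟨i₀⟩⟩
  · exact ⟨0, isEmptyElim⟩
  · exact ⟨f i₀, fun i => L.eq_of_forall_sum_smul_eq_zero hker hf i i₀⟩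

end Matrix

theorem equilibrium_implies_gne_characterization_general (N n m l : ℕ)
    (P : Fin N → EuclideanSpace ℝ (Fin n) → EuclideanSpace ℝ (Fin n))
    (g : Fin N → EuclideanSpace ℝ (Fin n) → EuclideanSpace ℝ (Fin m) → EuclideanSpace ℝ (Fin n))
    (φ : Fin N → EuclideanSpace ℝ (Fin n) → EuclideanSpace ℝ (Fin m))
    (A : Fin N → EuclideanSpace ℝ (Fin n) →ₗ[ℝ] EuclideanSpace ℝ (Fin l))
    (d : Fin N → EuclideanSpace ℝ (Fin l))
    (α : ℝ)
    (L : Matrix (Fin N) (Fin N) ℝ)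
    (hcol : ∀ j, ∑ i, L i j = 0)
    (hker : ∀ v : Fin N → ℝ, Matrix.mulVec L v = 0 → ∃ c : ℝ, v = fun _ => c)
    (x v : Fin N → EuclideanSpace ℝ (Fin n))
    (μ z : Fin N → EuclideanSpace ℝ (Fin l)) (hz : ∑ i, z i = 0)
    (η w : Fin N → EuclideanSpace ℝ (Fin m))
    (y : Fin N → EuclideanSpace ℝ (Fin n)) (hy : ∀ i, y i = P i (x i))
    (heq1 : ∀ i, (0 : EuclideanSpace ℝ (Fin n)) =
      -x i + y i - g i (y i) (η i) - LinearMap.adjoint (A i) (μ i))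
    (heq2 : ∀ i, (0 : EuclideanSpace ℝ (Fin l)) =
      -(α • ∑ j, L i j • μ j) - z i + A i (y i) - d i)
    (heq3 : ∀ i, ∑ j, L i j • μ j = (0 : EuclideanSpace ℝ (Fin l)))
    (heq4 : ∀ i, (0 : EuclideanSpace ℝ (Fin m)) =
      -η i - (∑ j, L i j • η j) - (∑ j, L i j • w j) + (N : ℝ) • φ i (y i))
    (heq5 : ∀ i, ∑ j, L i j • η j = (0 : EuclideanSpace ℝ (Fin m))) :
    (∀ i, η i = ∑ j, φ j (y j)) ∧
    (∃ μstar : EuclideanSpace ℝ (Fin l), (∀ i, μ i = μstar) ∧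
      (∀ i, y i = P i (y i - g i (y i) (∑ j, φ j (y j)) - LinearMap.adjoint (A i) μstar))) ∧
    (∑ i, A i (y i) = ∑ i, d i) := by
  obtain ⟨μstar, hμ⟩ := L.exists_eq_const_of_forall_sum_smul_eq_zero hker heq3
  obtain ⟨c, hηc⟩ := L.exists_eq_const_of_forall_sum_smul_eq_zero hker heq5
  -- Summed over the agents, `z` drops out since `∑ z = 0` and `w` since `L` has zero column sums.
  have hconstraint : ∑ i, A i (y i) = ∑ i, d i := by
    have h := Finset.sum_eq_zero fun i (_ : i ∈ Finset.univ) => (heq2 i).symm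
    simpa only [heq3, hz, Finset.sum_sub_distrib, Finset.sum_neg_distrib, smul_zero, neg_zero,
      Finset.sum_const_zero, zero_sub, neg_add_eq_sub, sub_zero, sub_eq_zero] using h
  have hη_sum : (N : ℝ) • ∑ i, φ i (y i) = ∑ i, η i := by
    have h := Finset.sum_eq_zero fun i (_ : i ∈ Finset.univ) => (heq4 i).symm
    simpa only [heq5, L.sum_sum_smul_eq_zero_of_sum_col_eq_zero hcol w, Finset.sum_sub_distrib,
      Finset.sum_add_distrib, Finset.sum_neg_distrib, ← Finset.smul_sum, Finset.sum_const_zero,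
      sub_zero, neg_add_eq_sub, sub_eq_zero] using h
  have hη : ∀ i, η i = ∑ j, φ j (y j) := fun i => by
    have hN : (N : ℝ) ≠ 0 := Nat.cast_ne_zero.mpr (Fin.pos i).ne'
    refine smul_right_injective (EuclideanSpace ℝ (Fin m)) hN ?_
    simp only [hη_sum, hηc, Finset.sum_const, Finset.card_univ, Fintype.card_fin,
      Nat.cast_smul_eq_nsmul]
  refine ⟨hη, ⟨μstar, hμ, fun i => ?_⟩, hconstraint⟩
  have hx : x i = y i - g i (y i) (∑ j, φ j (y j)) - LinearMap.adjoint (A i) μstar := by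
    rw [← hη i, ← hμ i, eq_comm, ← sub_eq_zero, heq1 i]
    abel
  rw [← hx, hy i]

/-- Sufficiency part of Lemma 3: an equilibrium of the closed-loop system yields consensual
aggregator estimates equal to the true aggregator, a common Lagrange multiplier, satisfaction of
the coupled constraint, and the GNE fixed-point characterization. -/
theorem equilibrium_implies_gne_characterization (N n m l : ℕ)
    (Ω : Fin N → Set (EuclideanSpace ℝ (Fin n)))
    (hΩne : ∀ i, (Ω i).Nonempty) (hΩcl : ∀ i, IsClosed (Ω i)) (hΩcvx : ∀ i, Convex ℝ (Ω i))
    (P : Fin N → EuclideanSpace ℝ (Fin n) → EuclideanSpace ℝ (Fin n))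
    (hPmem : ∀ i x, P i x ∈ Ω i)
    (hPproj : ∀ i x, ∀ u ∈ Ω i, ⟪x - P i x, u - P i x⟫ ≤ 0)
    (g : Fin N → EuclideanSpace ℝ (Fin n) → EuclideanSpace ℝ (Fin m) → EuclideanSpace ℝ (Fin n))
    (φ : Fin N → EuclideanSpace ℝ (Fin n) → EuclideanSpace ℝ (Fin m))
    (A : Fin N → EuclideanSpace ℝ (Fin n) →ₗ[ℝ] EuclideanSpace ℝ (Fin l))
    (d : Fin N → EuclideanSpace ℝ (Fin l))
    (α : ℝ) (hα : 0 < α)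
    (L : Matrix (Fin N) (Fin N) ℝ)
    (hrow : ∀ i, ∑ j, L i j = 0)
    (hcol : ∀ j, ∑ i, L i j = 0)
    (hker : ∀ v : Fin N → ℝ, Matrix.mulVec L v = 0 → ∃ c : ℝ, v = fun _ => c)
    (x v : Fin N → EuclideanSpace ℝ (Fin n)) (hv : ∀ i, v i = 0)
    (μ z : Fin N → EuclideanSpace ℝ (Fin l)) (hz : ∑ i, z i = 0)
    (η w : Fin N → EuclideanSpace ℝ (Fin m))
    (y : Fin N → EuclideanSpace ℝ (Fin n)) (hy : ∀ i, y i = P i (x i))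
    (heq1 : ∀ i, (0 : EuclideanSpace ℝ (Fin n)) =
      -x i + y i - g i (y i) (η i) - LinearMap.adjoint (A i) (μ i))
    (heq2 : ∀ i, (0 : EuclideanSpace ℝ (Fin l)) =
      -(α • ∑ j, L i j • μ j) - z i + A i (y i) - d i)
    (heq3 : ∀ i, ∑ j, L i j • μ j = (0 : EuclideanSpace ℝ (Fin l)))
    (heq4 : ∀ i, (0 : EuclideanSpace ℝ (Fin m)) =
      -η i - (∑ j, L i j • η j) - (∑ j, L i j • w j) + (N : ℝ) • φ i (y i))
    (heq5 : ∀ i, ∑ j, L i j • η j = (0 : EuclideanSpace ℝ (Fin m))) :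
    (∀ i, η i = ∑ j, φ j (y j)) ∧
    (∃ μstar : EuclideanSpace ℝ (Fin l), (∀ i, μ i = μstar) ∧
      (∀ i, y i = P i (y i - g i (y i) (∑ j, φ j (y j)) - LinearMap.adjoint (A i) μstar))) ∧
    (∑ i, A i (y i) = ∑ i, d i) :=
  equilibrium_implies_gne_characterization_general N n m l P g φ A d α L hcol hker x v μ z hz η w y
    hy heq1 heq2 heq3 heq4 heq5
end

section
/- Let each Ω_i ⊆ ℝ^n be nonempty, closed and convex with metric projections P_{Ω_i}; let g_i : ℝ^n × ℝ^m → ℝ^n, φ_i : ℝ^n → ℝ^m, A_i ∈ ℝ^{l×n}, d_i ∈ ℝ^l, α > 0, and σ(y) = Σ_i φ_i(y_i). Let L ∈ ℝ^{N×N} satisfy 1_NᵀL = 0 and have kernel exactly the span of 1_N. Suppose y* with y_i* ∈ Ω_i and μ* ∈ ℝ^l satisfy y_i* = P_{Ω_i}(y_i* − g_i(y_i*, σ(y*)) − A_iᵀμ*) for all i and Σ_i A_i y_i* = Σ_i d_i. Then there exist x_i* ∈ ℝ^n, z_i* ∈ ℝ^l with Σ_i z_i* = 0, and η_i*, w_i*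 ∈ ℝ^m such that, with μ_i* := μ* and v_i* := 0, all of the following equilibrium equations hold: y_i* = P_{Ω_i}(x_i*); 0 = −x_i* + y_i* − g_i(y_i*, η_i*) − A_iᵀμ_i*; 0 = −α Σ_j L_{ij} μ_j* − z_i* + A_i y_i* − d_i; Σ_j L_{ij} μ_j* = 0; 0 = −η_i* − Σ_j L_{ij} η_j* − Σ_j L_{ij} w_j* + N φ_i(y_i*); and Σ_j L_{ij} η_j* = 0. -/
open scoped RealInnerProductSpace

/-!
Take the consensus multiplier `μ_i = μ*` and the consensus estimate `η_i = σ(y*)`. Since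
`ker L` contains the constants, `L 1 = 0` and every Laplacian term applied to a consensus
vector vanishes, so all equations but the one for `w` are immediate. That one asks for
`L w = N φ(y*) - σ(y*)`, whose right side sums to zero; because `1ᵀ L = 0` and `ker L` is
one-dimensional, the range of `L` is exactly the zero-sum hyperplane.
-/

namespace Matrix

theorem exists_mulVec_eq_of_sum_eq_zero {K ι : Type*} [Field K] [Fintype ι]
    (L : Matrix ι ι K) (hcol : ∀ j, ∑ i, L i j = 0)
    (hker : Module.finrank K (LinearMap.ker L.mulVecLin) ≤ 1)
    {b : ι → K} (hb : ∑ i, b i = 0) : ∃ w, L *ᵥ w = b := by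
  rcases isEmpty_or_nonempty ι with hι | ⟨⟨i₀⟩⟩
  · exact ⟨0, Subsingleton.elim _ _⟩
  classical
  let s : (ι → K) →ₗ[K] K := ∑ i, LinearMap.proj i
  have hs : ∀ v, s v = ∑ i, v i := fun v => by simp [s]
  have hs_surj : Function.Surjective s := fun r => ⟨Pi.single i₀ r, by simp [hs]⟩
  have hrange_le : LinearMap.range L.mulVecLin ≤ LinearMap.ker s := by
    rintro _ ⟨w, rfl⟩
    simp only [LinearMap.mem_ker, hs, mulVecLin_apply, mulVec, dotProduct]
    rw [Finset.sum_comm]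
    simp [← Finset.sum_mul, hcol]
  have hrange_s : Module.finrank K (LinearMap.range s) = 1 := by
    rw [LinearMap.range_eq_top.mpr hs_surj, finrank_top, Module.finrank_self]
  have h₁ := LinearMap.finrank_range_add_finrank_ker L.mulVecLin
  have h₂ := LinearMap.finrank_range_add_finrank_ker s
  have hrange : LinearMap.range L.mulVecLin = LinearMap.ker s :=
    Submodule.eq_of_le_of_finrank_eq hrange_le
      (le_antisymm (Submodule.finrank_mono hrange_le) (by omega))
  obtain ⟨w, hw⟩ : b ∈ LinearMap.range L.mulVecLin := by
    rw [hrange, LinearMap.mem_ker, hs, hb]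
  exact ⟨w, hw⟩

theorem exists_sum_smul_eq_of_sum_eq_zero {K ι E : Type*} [Field K] [Fintype ι]
    [AddCommGroup E] [Module K E]
    (L : Matrix ι ι K) (hcol : ∀ j, ∑ i, L i j = 0)
    (hker : Module.finrank K (LinearMap.ker L.mulVecLin) ≤ 1)
    {b : ι → E} (hb : ∑ i, b i = 0) : ∃ w : ι → E, ∀ i, ∑ j, L i j • w j = b i := by
  rcases isEmpty_or_nonempty ι with hι | ⟨⟨i₀⟩⟩
  · exact ⟨0, isEmptyElim⟩
  classical
  have hu : ∀ k, ∃ u, L *ᵥ u = Pi.single k 1 - Pi.single i₀ 1 := fun k =>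
    L.exists_mulVec_eq_of_sum_eq_zero hcol hker (by simp [Finset.sum_sub_distrib])
  choose u hu using hu
  -- `b = Σ_k (e_k - e_{i₀}) ⊗ b k` because `Σ b = 0`, and each `e_k - e_{i₀}` lies in `range L`.
  refine ⟨fun j => ∑ k, u k j • b k, fun i => ?_⟩
  calc ∑ j, L i j • ∑ k, u k j • b k = ∑ k, (L *ᵥ u k) i • b k := by
        simp only [Finset.smul_sum, smul_smul, mulVec, dotProduct, Finset.sum_smul]
        exact Finset.sum_comm
    _ = b i := by simp [hu, sub_smul, Finset.sum_sub_distrib, Pi.single_apply, hb]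

end Matrix

theorem gne_characterization_implies_equilibrium_general (N n m l : ℕ)
    (P : Fin N → EuclideanSpace ℝ (Fin n) → EuclideanSpace ℝ (Fin n))
    (g : Fin N → EuclideanSpace ℝ (Fin n) → EuclideanSpace ℝ (Fin m) → EuclideanSpace ℝ (Fin n))
    (φ : Fin N → EuclideanSpace ℝ (Fin n) → EuclideanSpace ℝ (Fin m))
    (A : Fin N → EuclideanSpace ℝ (Fin n) →ₗ[ℝ] EuclideanSpace ℝ (Fin l))
    (d : Fin N → EuclideanSpace ℝ (Fin l))
    (α : ℝ)
    (L : Matrix (Fin N) (Fin N) ℝ)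
    (hcol : ∀ j, ∑ i, L i j = 0)
    (hker : ∀ v : Fin N → ℝ, Matrix.mulVec L v = 0 ↔ ∃ c : ℝ, v = fun _ => c)
    (y : Fin N → EuclideanSpace ℝ (Fin n))
    (μstar : EuclideanSpace ℝ (Fin l))
    (hfix : ∀ i, y i = P i (y i - g i (y i) (∑ j, φ j (y j)) - LinearMap.adjoint (A i) μstar))
    (hcon : ∑ i, A i (y i) = ∑ i, d i) :
    ∃ (x : Fin N → EuclideanSpace ℝ (Fin n)) (z : Fin N → EuclideanSpace ℝ (Fin l))
      (η w : Fin N → EuclideanSpace ℝ (Fin m)),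
      (∑ i, z i = 0) ∧
      (∀ i, y i = P i (x i)) ∧
      (∀ i, (0 : EuclideanSpace ℝ (Fin n)) =
        -x i + y i - g i (y i) (η i) - LinearMap.adjoint (A i) μstar) ∧
      (∀ i, (0 : EuclideanSpace ℝ (Fin l)) =
        -(α • ∑ j, L i j • μstar) - z i + A i (y i) - d i) ∧
      (∀ i, ∑ j, L i j • μstar = (0 : EuclideanSpace ℝ (Fin l))) ∧
      (∀ i, (0 : EuclideanSpace ℝ (Fin m)) =
        -η i - (∑ j, L i j • η j) - (∑ j, L i j • w j) + (N : ℝ) • φ i (y i)) ∧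
      (∀ i, ∑ j, L i j • η j = (0 : EuclideanSpace ℝ (Fin m))) := by
  have hrow : ∀ i, ∑ j, L i j = 0 := fun i => by
    simpa [Matrix.mulVec, dotProduct] using congrFun ((hker fun _ => 1).2 ⟨1, rfl⟩) i
  have hconst : ∀ {E : Type} [AddCommGroup E] [Module ℝ E] (i : Fin N) (c : E),
      ∑ j, L i j • c = 0 := fun i c => by
    rw [← Finset.sum_smul, hrow, zero_smul]
  have hker_span : LinearMap.ker L.mulVecLin = Submodule.span ℝ {fun _ => 1} := by
    ext v
    simp [Submodule.mem_span_singleton, hker, eq_comm, funext_iff]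
  have hker_rank : Module.finrank ℝ (LinearMap.ker L.mulVecLin) ≤ 1 := by
    rw [hker_span]
    exact (finrank_span_le_card _).trans (by simp)
  set σ := ∑ j, φ j (y j)
  obtain ⟨w, hw⟩ := L.exists_sum_smul_eq_of_sum_eq_zero hcol hker_rank
    (b := fun i => (N : ℝ) • φ i (y i) - σ)
    (by simp [Finset.sum_sub_distrib, ← Finset.smul_sum, Nat.cast_smul_eq_nsmul, σ])
  refine ⟨fun i => y i - g i (y i) σ - LinearMap.adjoint (A i) μstar, fun i => A i (y i) - d i,
    fun _ => σ, w, by rw [Finset.sum_sub_distrib, hcon, sub_self], hfix,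
    fun i => by beta_reduce; abel,
    fun i => by simp [hconst], fun i => hconst i μstar, fun i => by rw [hconst, hw]; abel,
    fun i => hconst i σ⟩

/-- Necessity part of Lemma 3: if `y*` satisfies the GNE fixed-point characterization with a
common Lagrange multiplier `μ*` and the coupled constraint, then there exists an equilibrium
`(x*, v* = 0, μ_i* = μ*, z*, η*, w*)` of the closed-loop system. -/
theorem gne_characterization_implies_equilibrium (N n m l : ℕ)
    (Ω : Fin N → Set (EuclideanSpace ℝ (Fin n)))
    (hΩne : ∀ i, (Ω i).Nonempty) (hΩcl : ∀ i, IsClosed (Ω i)) (hΩcvx : ∀ i, Convex ℝ (Ω i))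
    (P : Fin N → EuclideanSpace ℝ (Fin n) → EuclideanSpace ℝ (Fin n))
    (hPmem : ∀ i x, P i x ∈ Ω i)
    (hPproj : ∀ i x, ∀ u ∈ Ω i, ⟪x - P i x, u - P i x⟫ ≤ 0)
    (g : Fin N → EuclideanSpace ℝ (Fin n) → EuclideanSpace ℝ (Fin m) → EuclideanSpace ℝ (Fin n))
    (φ : Fin N → EuclideanSpace ℝ (Fin n) → EuclideanSpace ℝ (Fin m))
    (A : Fin N → EuclideanSpace ℝ (Fin n) →ₗ[ℝ] EuclideanSpace ℝ (Fin l))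
    (d : Fin N → EuclideanSpace ℝ (Fin l))
    (α : ℝ) (hα : 0 < α)
    (L : Matrix (Fin N) (Fin N) ℝ)
    (hcol : ∀ j, ∑ i, L i j = 0)
    (hker : ∀ v : Fin N → ℝ, Matrix.mulVec L v = 0 ↔ ∃ c : ℝ, v = fun _ => c)
    (y : Fin N → EuclideanSpace ℝ (Fin n))
    (μstar : EuclideanSpace ℝ (Fin l))
    (hymem : ∀ i, y i ∈ Ω i)
    (hfix : ∀ i, y i = P i (y i - g i (y i) (∑ j, φ j (y j)) - LinearMap.adjoint (A i) μstar))
    (hcon : ∑ i, A i (y i) = ∑ i, d i) :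
    ∃ (x : Fin N → EuclideanSpace ℝ (Fin n)) (z : Fin N → EuclideanSpace ℝ (Fin l))
      (η w : Fin N → EuclideanSpace ℝ (Fin m)),
      (∑ i, z i = 0) ∧
      (∀ i, y i = P i (x i)) ∧
      (∀ i, (0 : EuclideanSpace ℝ (Fin n)) =
        -x i + y i - g i (y i) (η i) - LinearMap.adjoint (A i) μstar) ∧
      (∀ i, (0 : EuclideanSpace ℝ (Fin l)) =
        -(α • ∑ j, L i j • μstar) - z i + A i (y i) - d i) ∧
      (∀ i, ∑ j, L i j • μstar = (0 : EuclideanSpace ℝ (Fin l))) ∧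
      (∀ i, (0 : EuclideanSpace ℝ (Fin m)) =
        -η i - (∑ j, L i j • η j) - (∑ j, L i j • w j) + (N : ℝ) • φ i (y i)) ∧
      (∀ i, ∑ j, L i j • η j = (0 : EuclideanSpace ℝ (Fin m))) :=
  gne_characterization_implies_equilibrium_general N n m l P g φ A d α L hcol hker y μstar hfix hcon
end
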